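/- arXiv:1703.09421 — 3 statements merged into one kernel-verified Lean document; each statement's English description precedes it below -/
import Mathlib

section
/- Consider a single-row puzzle with swaps and rotations using exactly two colors. Call a piece a constant if every rotation gives equal left and right colors (i.e., both pairs of opposite edges are monochromatic pairs), and a switch otherwise. If the puzzle contains only constants, it is solvable if and only if it does not contain both a piece all of whose edges are black and a piece all of whose edges are white. -/
/-!
Every placement of a constant piece shows the same colour on its left and right edge, so along a
matching row all pieces show one and the same colour; an all-black and an all-white piece cannot
both do so. Conversely a constant piece has the shape (a, b, a, b), so a quarter turn at most makes
it show any colour it contains; if one monochromatic piece, of colour ¬c, is absent, every piece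
can be turned to show c, and any order of the pieces then matches.
-/

/-- A two-color piece: a 4-tuple (right, top, left, bottom) of Booleans,
where `true` is black and `false` is white. -/
abbrev BPiece := Bool × Bool × Bool × Bool

/-- A 90° rotation cyclically shifts the 4-tuple of edge colors. -/
def rotp (p : BPiece) : BPiece := (p.2.1, p.2.2.1, p.2.2.2, p.1)

/-- A piece together with a chosen rotation, as actually placed. -/
def place (x : BPiece × Fin 4) : BPiece := rotp^[(x.2 : ℕ)] x.1

/-- Solvability of the single-row puzzle with swaps and rotations, free borders:
some ordering of all the pieces together with chosen rotations such that every
pair of adjacent vertical edges matches. -/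
def Solvable (P : Multiset BPiece) : Prop :=
  ∃ l : List (BPiece × Fin 4),
    (↑(l.map Prod.fst) : Multiset BPiece) = P ∧
    l.Chain' fun x y => (place x).1 = (place y).2.2.1

/-- A constant piece: every rotation gives equal left and right colors. -/
def IsConstant (p : BPiece) : Prop :=
  ∀ k : Fin 4, (rotp^[(k : ℕ)] p).1 = (rotp^[(k : ℕ)] p).2.2.1

/-- A switch: some rotation gives different left and right colors. -/
def IsSwitch (p : BPiece) : Prop :=
  ∃ k : Fin 4, (rotp^[(k : ℕ)] p).1 ≠ (rotp^[(k : ℕ)] p).2.2.1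

/-- The all-black piece. -/
def allBlack : BPiece := (true, true, true, true)

/-- The all-white piece. -/
def allWhite : BPiece := (false, false, false, false)

theorem List.IsChain.apply_eq_apply {α β : Type*} {f g : α → β} {l : List α}
    (hc : l.IsChain fun x y => f x = g y) (hgf : ∀ x ∈ l, g x = f x) {x y : α}
    (hx : x ∈ l) (hy : y ∈ l) : f x = f y := by
  have hmap : (l.map f).IsChain (· = ·) :=
    (List.isChain_map f).2 (hc.imp_of_mem_imp fun _ b _ hb h => h.trans (hgf b hb))
  exact hmap.pairwise.forall_of_forall (fun _ _ => rfl) (List.mem_map_of_mem hx)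
    (List.mem_map_of_mem hy)

theorem List.isChain_of_forall_mem {α : Type*} {R : α → α → Prop} {l : List α}
    (h : ∀ x ∈ l, ∀ y ∈ l, R x y) : l.IsChain R :=
  (List.pairwise_of_forall_mem_list h).isChain

def monochrome (c : Bool) : BPiece := (c, c, c, c)

theorem place_monochrome (c : Bool) (k : Fin 4) : place (monochrome c, k) = monochrome c :=
  Function.iterate_fixed rfl _

def turnToShow (c : Bool) (p : BPiece) : Fin 4 := if p.1 = c then 0 else 1

/- A constant piece is (a, b, a, b); if neither a nor b is c, it is `monochrome (!c)`. -/
theorem place_turnToShow_fst (c : Bool) {p : BPiece} (hp : IsConstant p)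
    (hne : p ≠ monochrome (!c)) : (place (p, turnToShow c p)).1 = c := by
  revert c p; unfold IsConstant place turnToShow monochrome; decide

theorem place_snd_snd_fst_eq_fst {x : BPiece × Fin 4} (hx : IsConstant x.1) :
    (place x).2.2.1 = (place x).1 :=
  (hx x.2).symm

theorem not_solvable_of_monochrome_mem {P : Multiset BPiece} (hconst : ∀ p ∈ P, IsConstant p)
    (hB : monochrome true ∈ P) (hW : monochrome false ∈ P) : ¬Solvable P := by
  rintro ⟨l, rfl, hc⟩
  have hshows : ∀ c, monochrome c ∈ (l.map Prod.fst : Multiset BPiece) →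
      ∃ x ∈ l, (place x).1 = c := by
    intro c hmem
    obtain ⟨x, hx, hx1⟩ := List.mem_map.1 (Multiset.mem_coe.1 hmem)
    refine ⟨x, hx, ?_⟩
    rw [← Prod.mk.eta (p := x), hx1, place_monochrome]
    rfl
  obtain ⟨xB, hxB, hB⟩ := hshows true hB
  obtain ⟨xW, hxW, hW⟩ := hshows false hW
  have hlr : ∀ x ∈ l, (place x).2.2.1 = (place x).1 := fun x hx =>
    place_snd_snd_fst_eq_fst (hconst _ (Multiset.mem_coe.2 (List.mem_map_of_mem hx)))
  exact absurd (hc.apply_eq_apply hlr hxB hxW) (by rw [hB, hW]; decide)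

theorem solvable_of_monochrome_not_mem {P : Multiset BPiece} (c : Bool)
    (hconst : ∀ p ∈ P, IsConstant p) (hc : monochrome (!c) ∉ P) : Solvable P := by
  refine ⟨P.toList.map fun p => (p, turnToShow c p), by simp [Function.comp_def],
    List.isChain_of_forall_mem ?_⟩
  have hshows : ∀ x ∈ P.toList.map fun p => (p, turnToShow c p),
      (place x).1 = c ∧ (place x).2.2.1 = c := by
    simp only [List.mem_map, Multiset.mem_toList]
    rintro _ ⟨p, hp, rfl⟩
    have hright := place_turnToShow_fst c (hconst p hp) (ne_of_mem_of_not_mem hp hc)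
    exact ⟨hright, (place_snd_snd_fst_eq_fst (hconst p hp)).trans hright⟩
  exact fun x hx y hy => (hshows x hx).1.trans (hshows y hy).2.symm

/-- A two-color single-row puzzle (swaps and rotations) consisting only of
constant pieces is solvable iff it does not contain both an all-black and an
all-white piece. -/
theorem constants_solvable_iff (P : Multiset BPiece)
    (hconst : ∀ p ∈ P, IsConstant p) :
    Solvable P ↔ ¬(allBlack ∈ P ∧ allWhite ∈ P) := by
  constructor
  · rintro hs ⟨hB, hW⟩
    exact not_solvable_of_monochrome_mem hconst hB hW hs
  · intro h
    by_cases hB : allBlack ∈ P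
    · exact solvable_of_monochrome_not_mem true hconst fun hW => h ⟨hB, hW⟩
    · exact solvable_of_monochrome_not_mem false hconst hB
end

section
/- Consider a single-row puzzle with swaps and rotations over two colors that contains at least one all-black piece, at least one all-white piece, and at least one switch (a piece admitting a rotation with different left and right colors). Then the puzzle is solvable. -/
/-
Only the switch matters. A piece that is not a switch has equal left and right colors in every
rotation, so it can only follow a piece of its own color, while a switch can be turned to go
from either color to the other. Lay out all white non-switches, then the given switch turned
from white to black, then all black non-switches, and finally the remaining switches, each
turned to start with the color its predecessor ends with.
-/

def SolvableFrom (a : Bool) (P : Multiset BPiece) : Prop :=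
  ∃ l : List (BPiece × Fin 4),
    (↑(l.map Prod.fst) : Multiset BPiece) = P ∧
    l.IsChain (fun x y => (place x).1 = (place y).2.2.1) ∧
    ∀ x ∈ l.head?, (place x).2.2.1 = a

lemma SolvableFrom.solvable {a : Bool} {P : Multiset BPiece} (h : SolvableFrom a P) :
    Solvable P :=
  let ⟨l, hl, hchain, _⟩ := h
  ⟨l, hl, hchain⟩

lemma solvableFrom_zero (a : Bool) : SolvableFrom a 0 :=
  ⟨[], rfl, List.isChain_nil, by simp⟩

lemma SolvableFrom.cons {b : Bool} {P : Multiset BPiece} (h : SolvableFrom b P)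
    (x : BPiece × Fin 4) (hx : (place x).1 = b) : SolvableFrom (place x).2.2.1 (x.1 ::ₘ P) := by
  obtain ⟨l, hl, hchain, hhead⟩ := h
  refine ⟨x :: l, by rw [← hl]; rfl, List.isChain_cons.mpr ⟨fun y hy => ?_, hchain⟩, by simp⟩
  exact hx.trans (hhead y hy).symm

/-- Turning a switch by 180° swaps its left and right colors, so it can be turned either way. -/
lemma exists_rotation_of_isSwitch : ∀ p : BPiece, IsSwitch p → ∀ a : Bool,
    ∃ k : Fin 4, (place (p, k)).2.2.1 = a ∧ (place (p, k)).1 = !a := by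
  unfold IsSwitch place
  decide

lemma left_eq_right_of_not_isSwitch {p : BPiece} (hp : ¬IsSwitch p) : p.1 = p.2.2.1 :=
  not_ne_iff.mp fun h => hp ⟨0, h⟩

lemma solvableFrom_of_forall_isSwitch {P : Multiset BPiece} (hP : ∀ p ∈ P, IsSwitch p)
    (a : Bool) : SolvableFrom a P := by
  induction P using Multiset.induction_on generalizing a with
  | empty => exact solvableFrom_zero a
  | cons p P ih =>
    obtain ⟨k, hleft, hright⟩ :=
      exists_rotation_of_isSwitch p (hP p (Multiset.mem_cons_self p P)) a
    have := (ih (fun q hq => hP q (Multiset.mem_cons_of_mem hq)) !a).cons (p, k) hright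
    rwa [hleft] at this

lemma SolvableFrom.add_of_forall_color {a : Bool} {P : Multiset BPiece} (h : SolvableFrom a P)
    {Q : Multiset BPiece} (hQ : ∀ p ∈ Q, p.1 = a ∧ p.2.2.1 = a) : SolvableFrom a (Q + P) := by
  induction Q using Multiset.induction_on with
  | empty => simpa using h
  | cons p Q ih =>
    obtain ⟨hright, hleft⟩ := hQ p (Multiset.mem_cons_self p Q)
    have := (ih fun q hq => hQ q (Multiset.mem_cons_of_mem hq)).cons (p, 0) hright
    rwa [Multiset.cons_add, ← hleft]

lemma solvableFrom_of_nonSwitch_color_eq {a : Bool} {P : Multiset BPiece}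
    (hP : ∀ p ∈ P, ¬IsSwitch p → p.1 = a) : SolvableFrom a P := by
  classical
  rw [← Multiset.filter_add_not IsSwitch P, add_comm]
  refine (solvableFrom_of_forall_isSwitch (fun p hp => (Multiset.mem_filter.mp hp).2) a)
    |>.add_of_forall_color fun p hp => ?_
  obtain ⟨hpP, hp⟩ := Multiset.mem_filter.mp hp
  exact ⟨hP p hpP hp, (left_eq_right_of_not_isSwitch hp) ▸ hP p hpP hp⟩

theorem switch_makes_solvable_general (P : Multiset BPiece)
    (hs : ∃ p ∈ P, IsSwitch p) :
    Solvable P := by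
  classical
  obtain ⟨s, hsP, hs⟩ := hs
  let IsWhiteConstant : BPiece → Prop := fun p => ¬IsSwitch p ∧ p.1 = false
  have hP :
      (P.erase s).filter IsWhiteConstant + s ::ₘ (P.erase s).filter (¬IsWhiteConstant ·) = P := by
    rw [Multiset.add_cons, Multiset.filter_add_not, Multiset.cons_erase hsP]
  obtain ⟨k, hleft, hright⟩ := exists_rotation_of_isSwitch s hs false
  have hrest : SolvableFrom true ((P.erase s).filter (¬IsWhiteConstant ·)) :=
    solvableFrom_of_nonSwitch_color_eq fun p hp hns => by
      simpa [IsWhiteConstant, hns] using (Multiset.mem_filter.mp hp).2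
  have hwhite : ∀ p ∈ (P.erase s).filter IsWhiteConstant, p.1 = false ∧ p.2.2.1 = false :=
    fun p hp => by
      obtain ⟨hns, hcolor⟩ := (Multiset.mem_filter.mp hp).2
      exact ⟨hcolor, left_eq_right_of_not_isSwitch hns ▸ hcolor⟩
  have hrow := (hleft ▸ hrest.cons (s, k) hright).add_of_forall_color hwhite
  rw [hP] at hrow
  exact hrow.solvable

/-- A two-color single-row puzzle (swaps and rotations) containing an all-black
piece, an all-white piece, and at least one switch is solvable. -/
theorem switch_makes_solvable (P : Multiset BPiece)
    (hb : allBlack ∈ P) (hw : allWhite ∈ P)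
    (hs : ∃ p ∈ P, IsSwitch p) :
    Solvable P :=
  switch_makes_solvable_general P hs
end

section
/- Let a two-color single-row puzzle (swaps and rotations allowed, free borders) contain both an all-black and an all-white piece. Then the puzzle is solvable if and only if it contains at least one switch piece (a piece with some rotation giving different left and right colors). -/
/-!
A constant piece leaves a row with the color it enters with, so in a row of constant pieces
every piece shows the same right color, which the all-black and the all-white piece cannot
both do. Conversely, lay the all-white pieces, then a switch turned from white to black, then
the all-black pieces, and finally all other pieces: each of those carries both colors, so it
can be entered from either color.
-/

theorem List.IsChain.exists_forall_eq {α β : Type*} [Nonempty β] {f g : α → β} {l : List α}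
    (hl : l.IsChain fun x y => f x = g y) (hfg : ∀ x ∈ l, f x = g x) :
    ∃ c, ∀ x ∈ l, f x = c := by
  have hmap : (l.map f).IsChain (· = ·) :=
    (List.isChain_map f).2 (hl.imp_of_mem_imp fun _ y _ hy hxy => hxy.trans (hfg y hy).symm)
  rcases l with _ | ⟨a, t⟩
  · exact ⟨Classical.arbitrary β, by simp⟩
  · rw [List.isChain_eq_iff_eq_replicate] at hmap
    exact ⟨f a, fun x hx => List.eq_of_mem_replicate (hmap _ rfl ▸ List.mem_map_of_mem hx)⟩

/-- `IsRow c l d`: the placed pieces `l` form a row entered with color `c` and left with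
color `d`. -/
inductive IsRow : Bool → List (BPiece × Fin 4) → Bool → Prop
  | nil (c : Bool) : IsRow c [] c
  | cons {c d : Bool} {x : BPiece × Fin 4} {l : List (BPiece × Fin 4)} :
      (place x).2.2.1 = c → IsRow (place x).1 l d → IsRow c (x :: l) d

namespace IsRow

theorem isChain {c d : Bool} {l : List (BPiece × Fin 4)} (h : IsRow c l d) :
    l.IsChain fun x y => (place x).1 = (place y).2.2.1 := by
  induction h with
  | nil => exact .nil
  | cons _ hl ih =>
    cases hl with
    | nil => exact .singleton _
    | cons hy _ => exact .cons_cons hy.symm ih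

theorem append {c d e : Bool} {l l' : List (BPiece × Fin 4)} (h : IsRow c l d)
    (h' : IsRow d l' e) : IsRow c (l ++ l') e := by
  induction h with
  | nil => exact h'
  | cons hx _ ih => exact .cons hx (ih h')

end IsRow

theorem exists_isRow {C : Set Bool} (Q : Multiset BPiece)
    (hQ : ∀ q ∈ Q, ∀ c ∈ C, ∃ k : Fin 4, (place (q, k)).2.2.1 = c ∧ (place (q, k)).1 ∈ C)
    {c : Bool} (hc : c ∈ C) :
    ∃ l d, (↑(l.map Prod.fst) : Multiset BPiece) = Q ∧ IsRow c l d ∧ d ∈ C := by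
  induction Q using Multiset.induction_on generalizing c with
  | empty => exact ⟨[], c, rfl, .nil c, hc⟩
  | cons q Q ih =>
    obtain ⟨k, hleft, hright⟩ := hQ q (Multiset.mem_cons_self q Q) c hc
    obtain ⟨l, d, hl, hrow, hd⟩ :=
      ih (fun q' hq' => hQ q' (Multiset.mem_cons_of_mem hq')) hright
    exact ⟨(q, k) :: l, d, by simp [← hl], .cons hleft hrow, hd⟩

theorem IsSwitch.exists_place_false_true {p : BPiece} :
    IsSwitch p → ∃ k : Fin 4, (place (p, k)).2.2.1 = false ∧ (place (p, k)).1 = true := by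
  revert p; unfold IsSwitch place; decide

theorem exists_place_left_eq {q : BPiece} (hw : q ≠ allWhite) (hb : q ≠ allBlack) (c : Bool) :
    ∃ k : Fin 4, (place (q, k)).2.2.1 = c := by
  revert q c; unfold place; decide

theorem place_allBlack_fst (k : Fin 4) : (place (allBlack, k)).1 = true := by
  revert k; decide

theorem place_allWhite_fst (k : Fin 4) : (place (allWhite, k)).1 = false := by
  revert k; decide

theorem solvable_of_isSwitch {P : Multiset BPiece} {p : BPiece} (hp : p ∈ P) (hsw : IsSwitch p) :
    Solvable P := by
  obtain ⟨Q, rfl⟩ := Multiset.exists_cons_of_mem hp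
  set R := Q.filter (· ≠ allWhite)
  set M := R.filter (· ≠ allBlack)
  obtain ⟨lW, _, hW, hrowW, rfl⟩ := exists_isRow (C := {false}) (Q.filter (· = allWhite))
    (fun q hq c hc => by obtain rfl := (Multiset.mem_filter.1 hq).2; exact ⟨0, hc.symm, rfl⟩) rfl
  obtain ⟨k, hpl, hpr⟩ := hsw.exists_place_false_true
  obtain ⟨lB, _, hB, hrowB, rfl⟩ := exists_isRow (C := {true}) (R.filter (· = allBlack))
    (fun q hq c hc => by obtain rfl := (Multiset.mem_filter.1 hq).2; exact ⟨0, hc.symm, rfl⟩) rfl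
  obtain ⟨lM, d, hM, hrowM, -⟩ := exists_isRow (C := Set.univ) M
    (fun q hq c _ => by
      simp only [M, R, Multiset.mem_filter] at hq
      simpa using exists_place_left_eq hq.1.2 hq.2 c) (Set.mem_univ true)
  refine ⟨lW ++ (p, k) :: (lB ++ lM), ?_,
    (hrowW.append (.cons hpl (hpr ▸ hrowB.append hrowM))).isChain⟩
  simp only [List.map_append, List.map_cons, ← Multiset.coe_add, ← Multiset.cons_coe, hW, hB, hM]
  rw [Multiset.filter_add_not, Multiset.add_cons, Multiset.filter_add_not]

theorem Solvable.exists_color {P : Multiset BPiece} (hP : Solvable P)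
    (hconst : ∀ p ∈ P, IsConstant p) : ∃ c, ∀ p ∈ P, ∃ k : Fin 4, (place (p, k)).1 = c := by
  obtain ⟨l, rfl, hl⟩ := hP
  obtain ⟨c, hc⟩ := hl.exists_forall_eq fun x hx =>
    hconst x.1 (Multiset.mem_coe.2 (List.mem_map_of_mem hx)) x.2
  refine ⟨c, fun p hp => ?_⟩
  obtain ⟨x, hx, rfl⟩ := List.mem_map.1 (Multiset.mem_coe.1 hp)
  exact ⟨x.2, hc x hx⟩

/-- A two-color single-row puzzle (swaps and rotations) containing both an
all-black and an all-white piece is solvable iff it contains a switch. -/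
theorem solvable_iff_switch (P : Multiset BPiece)
    (hb : allBlack ∈ P) (hw : allWhite ∈ P) :
    Solvable P ↔ ∃ p ∈ P, IsSwitch p := by
  refine ⟨fun hP => ?_, fun ⟨p, hp, hsw⟩ => solvable_of_isSwitch hp hsw⟩
  by_contra! hno
  obtain ⟨c, hc⟩ := hP.exists_color fun p hp k => by_contra fun h => hno p hp ⟨k, h⟩
  obtain ⟨kb, hkb⟩ := hc _ hb
  obtain ⟨kw, hkw⟩ := hc _ hw
  exact absurd (hkb.trans hkw.symm) (by simp [place_allBlack_fst, place_allWhite_fst])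
end
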